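/- arXiv:1504.05611 — 9 statements merged into one kernel-verified Lean document; each statement's English description precedes it below -/
import Mathlib

section
/- Let E₀ be a continuum (nonempty compact connected set) in a compact Hausdorff space, let E₁ be a nonempty closed subset of E₀, and let C be a connected component of E₀ \ E₁. Then the closure of C meets E₁. -/
/-!
Suppose the closure of `C` misses `E₁`. Then `C` is closed, hence compact, so `C` and `E₁` have
disjoint open neighbourhoods `U` and `V`. In the compact set `K = E₀ \ V` the component of `x`
lies in `C ⊆ U`, and since components of compact Hausdorff spaces are intersections of clopen
sets, some relatively clopen piece of `K` contains `x` and lies in `U`. As `E₀ ∩ U ⊆ K`, that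
piece is relatively clopen in `E₀` as well, so connectedness forces `E₀ ⊆ U`, which is absurd
because `E₁ ⊆ E₀ ∩ V`.
-/

open Set

section

variable {X : Type*} [TopologicalSpace X]

/-- Šura-Bura lemma. -/
theorem exists_isClopen_connectedComponent_subset [CompactSpace X] [T2Space X] {x : X}
    {U : Set X} (hU : IsOpen U) (h : connectedComponent x ⊆ U) :
    ∃ V : Set X, IsClopen V ∧ connectedComponent x ⊆ V ∧ V ⊆ U := by
  let N := { s : Set X // IsClopen s ∧ x ∈ s }
  have : Nonempty N := ⟨⟨univ, isClopen_univ, mem_univ x⟩⟩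
  have hdir : Directed (· ⊇ ·) fun s : N => s.val := by
    rintro ⟨s, hs, hxs⟩ ⟨t, ht, hxt⟩
    exact ⟨⟨s ∩ t, hs.inter ht, hxs, hxt⟩, inter_subset_left, inter_subset_right⟩
  have hnhds : ∀ y ∈ ⋂ s : N, s.val, U ∈ nhds y := fun y hy =>
    hU.mem_nhds (h ((connectedComponent_eq_iInter_isClopen x).symm ▸ hy))
  obtain ⟨s, hsU⟩ := exists_subset_nhds_of_compactSpace hdir (fun s => s.2.1.1) hnhds
  exact ⟨s, s.2.1, s.2.1.connectedComponent_subset s.2.2, hsU⟩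

theorem IsCompact.exists_isOpen_isClosed_inter_subset_of_connectedComponentIn_subset
    [T2Space X] {K U : Set X} {x : X} (hK : IsCompact K) (hx : x ∈ K) (hU : IsOpen U)
    (h : connectedComponentIn K x ⊆ U) :
    ∃ O : Set X, IsOpen O ∧ x ∈ O ∧ IsClosed (K ∩ O) ∧ K ∩ O ⊆ U := by
  have : CompactSpace K := isCompact_iff_compactSpace.mp hK
  have hcomp : connectedComponent (⟨x, hx⟩ : K) ⊆ Subtype.val ⁻¹' U := by
    rw [← image_subset_iff, ← connectedComponentIn_eq_image hx]
    exact h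
  obtain ⟨V, hV, hxV, hVU⟩ :=
    exists_isClopen_connectedComponent_subset (hU.preimage continuous_subtype_val) hcomp
  obtain ⟨O, hO, rfl⟩ := isOpen_induced_iff.mp hV.2
  refine ⟨O, hO, hxV mem_connectedComponent, ?_, ?_⟩
  · rw [← Subtype.image_preimage_coe]
    exact (hV.1.isCompact.image continuous_subtype_val).isClosed
  · rw [← Subtype.image_preimage_coe, image_subset_iff]
    exact hVU

theorem isClosed_connectedComponentIn_of_closure_subset {F : Set X} {x : X} (hx : x ∈ F)
    (h : closure (connectedComponentIn F x) ⊆ F) : IsClosed (connectedComponentIn F x) :=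
  isClosed_of_closure_subset <|
    isPreconnected_connectedComponentIn.closure.subset_connectedComponentIn
      (subset_closure (mem_connectedComponentIn hx)) h

theorem IsPreconnected.subset_of_inter_subset_isClosed {s u t : Set X} (hs : IsPreconnected s)
    (hu : IsOpen u) (ht : IsClosed t) (hsu : s ∩ u ⊆ t) (htu : t ⊆ u)
    (hne : (s ∩ u).Nonempty) : s ⊆ u := by
  by_contra hsub
  obtain ⟨z, hzs, hzu⟩ := not_subset.mp hsub
  have hcover : s ⊆ u ∪ tᶜ := fun y hy => or_iff_not_imp_left.mpr fun hyu hyt => hyu (htu hyt)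
  obtain ⟨y, hys, hyu, hyt⟩ :=
    hs u tᶜ hu ht.isOpen_compl hcover hne ⟨z, hzs, fun hzt => hzu (htu hzt)⟩
  exact hyt (hsu ⟨hys, hyu⟩)

end

theorem closure_component_meets_general (X : Type*) [TopologicalSpace X]
    [T2Space X] (E₀ E₁ C : Set X)
    (h₀ : IsCompact E₀) (h₀c : IsConnected E₀)
    (h₁ : IsClosed E₁) (h₁ne : E₁.Nonempty) (h₁sub : E₁ ⊆ E₀)
    (hC : ∃ x ∈ E₀ \ E₁, C = connectedComponentIn (E₀ \ E₁) x) :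
    (closure C ∩ E₁).Nonempty := by
  obtain ⟨x, hx, rfl⟩ := hC
  set C := connectedComponentIn (E₀ \ E₁) x
  by_contra hmeet
  have hCE₀ : C ⊆ E₀ := (connectedComponentIn_subset _ x).trans sdiff_subset
  have hclosure : closure C ⊆ E₀ \ E₁ := fun y hy =>
    ⟨h₀.isClosed.closure_subset_iff.mpr hCE₀ hy, fun hy₁ => hmeet ⟨y, hy, hy₁⟩⟩
  have hC : IsClosed C := isClosed_connectedComponentIn_of_closure_subset hx hclosure
  obtain ⟨U, V, hU, hV, hCU, hE₁V, hUV⟩ := SeparatedNhds.of_isCompact_isCompact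
    (h₀.of_isClosed_subset hC hCE₀) (h₀.of_isClosed_subset h₁ h₁sub)
    (disjoint_left.mpr fun y hy => (connectedComponentIn_subset _ x hy).2)
  have hE₀U : E₀ ∩ U ⊆ E₀ \ V := fun y hy => ⟨hy.1, disjoint_left.mp hUV hy.2⟩
  have hxC : x ∈ C := mem_connectedComponentIn hx
  have hxK : x ∈ E₀ \ V := hE₀U ⟨hx.1, hCU hxC⟩
  obtain ⟨O, hO, hxO, hKO, hKOU⟩ :=
    (h₀.diff hV).exists_isOpen_isClosed_inter_subset_of_connectedComponentIn_subset hxK hU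
      ((connectedComponentIn_mono x (sdiff_subset_sdiff_right hE₁V)).trans hCU)
  have hE₀OU : E₀ ⊆ O ∩ U := h₀c.isPreconnected.subset_of_inter_subset_isClosed (hO.inter hU)
    hKO (fun y hy => ⟨hE₀U ⟨hy.1, hy.2.2⟩, hy.2.1⟩) (fun y hy => ⟨hy.2, hKOU hy⟩)
    ⟨x, hx.1, hxO, hCU hxC⟩
  obtain ⟨e, he⟩ := h₁ne
  exact disjoint_left.mp hUV (hE₀OU (h₁sub he)).2 (hE₁V he)

/-- Boundary bumping lemma: if `E₀` is a continuum in a compact Hausdorff space, `E₁` a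
nonempty closed subset of `E₀`, and `C` a connected component of `E₀ \ E₁`, then the
closure of `C` meets `E₁`. -/
theorem closure_component_meets (X : Type*) [TopologicalSpace X] [CompactSpace X]
    [T2Space X] (E₀ E₁ C : Set X)
    (h₀ : IsCompact E₀) (h₀c : IsConnected E₀)
    (h₁ : IsClosed E₁) (h₁ne : E₁.Nonempty) (h₁sub : E₁ ⊆ E₀)
    (hC : ∃ x ∈ E₀ \ E₁, C = connectedComponentIn (E₀ \ E₁) x) :
    (closure C ∩ E₁).Nonempty :=
  closure_component_meets_general X E₀ E₁ C h₀ h₀c h₁ h₁ne h₁sub hC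
end

section
/- Let (E_j)_{j∈ℕ} be a sequence of nonempty compact subsets of ℂ, let (m_j)_{j∈ℕ} be a sequence of positive integers, and let f : ℂ → ℂ be continuous, such that E_{j+1} ⊆ f^{m_j}(E_j) for all j. Set p_k = m_0 + m_1 + ... + m_k. Then there exists a point ζ ∈ E_0 such that f^{p_k}(ζ) ∈ E_{k+1} for every k ∈ ℕ. -/
/-! Let `S k` be the set of points of `E 0` whose orbit lies in `E j` at time
`m 0 + ⋯ + m (j - 1)` for every `j ≤ k`. Pulling a point of `E k` back step by step along the
covering relation shows `E k ⊆ f^[m 0 + ⋯ + m (k - 1)] '' S k`, so every `S k` is nonempty.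
The `S k` are closed, decreasing and contained in the compact set `E 0`, so by Cantor's
intersection theorem they have a common point. -/

open Finset

section Tracking

variable {X : Type*} (f : X → X) (m : ℕ → ℕ) (E : ℕ → Set X)

def trackingSet (k : ℕ) : Set X :=
  {z | ∀ j ≤ k, f^[∑ i ∈ range j, m i] z ∈ E j}

variable {f m E}

theorem trackingSet_antitone : Antitone (trackingSet f m E) :=
  fun _ _ hkl _ hz j hj => hz j (hj.trans hkl)

theorem trackingSet_subset_zero (k : ℕ) : trackingSet f m E k ⊆ E 0 :=
  fun _ hz => hz 0 k.zero_le

theorem subset_image_trackingSet (hcov : ∀ j, E (j + 1) ⊆ f^[m j] '' E j) :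
    ∀ k, E k ⊆ f^[∑ i ∈ range k, m i] '' trackingSet f m E k
  | 0 => fun z hz => ⟨z, fun j hj => by rwa [Nat.le_zero.mp hj], rfl⟩
  | k + 1 => by
    intro z hz
    obtain ⟨y, hy, rfl⟩ := hcov k hz
    obtain ⟨w, hw, rfl⟩ := subset_image_trackingSet hcov k hy
    have hsum : f^[∑ i ∈ range (k + 1), m i] w = f^[m k] (f^[∑ i ∈ range k, m i] w) := by
      rw [sum_range_succ, add_comm, Function.iterate_add_apply]
    refine ⟨w, fun j hj => ?_, hsum⟩
    rcases Nat.le_succ_iff.mp hj with hj | rfl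
    · exact hw j hj
    · rwa [hsum]

theorem nonempty_trackingSet (hcov : ∀ j, E (j + 1) ⊆ f^[m j] '' E j)
    (hne : ∀ j, (E j).Nonempty) (k : ℕ) : (trackingSet f m E k).Nonempty :=
  ((hne k).mono (subset_image_trackingSet hcov k)).of_image

variable [TopologicalSpace X]

theorem isClosed_trackingSet (hf : Continuous f) (hE : ∀ j, IsClosed (E j)) (k : ℕ) :
    IsClosed (trackingSet f m E k) := by
  simp only [trackingSet, Set.ofPred_forall]
  exact isClosed_biInter fun j _ => (hE j).preimage (hf.iterate _)

theorem exists_mem_forall_iterate_sum_mem (hf : Continuous f) (hE0 : IsCompact (E 0))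
    (hE : ∀ j, IsClosed (E j)) (hne : ∀ j, (E j).Nonempty)
    (hcov : ∀ j, E (j + 1) ⊆ f^[m j] '' E j) :
    ∃ ζ, ∀ j, f^[∑ i ∈ range j, m i] ζ ∈ E j := by
  obtain ⟨ζ, hζ⟩ := IsCompact.nonempty_iInter_of_sequence_nonempty_isCompact_isClosed _
    (fun k => trackingSet_antitone k.le_succ) (nonempty_trackingSet hcov hne)
    (hE0.of_isClosed_subset (isClosed_trackingSet hf hE 0) (trackingSet_subset_zero 0))
    (isClosed_trackingSet hf hE)
  exact ⟨ζ, fun j => Set.mem_iInter.mp hζ j j le_rfl⟩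

end Tracking

theorem exists_point_orbit_visits_general (f : ℂ → ℂ) (hf : Continuous f)
    (E : ℕ → Set ℂ) (hEc : ∀ j, IsCompact (E j)) (hEne : ∀ j, (E j).Nonempty)
    (m : ℕ → ℕ)
    (hcov : ∀ j, E (j + 1) ⊆ f^[m j] '' E j) :
    ∃ ζ ∈ E 0, ∀ k : ℕ, f^[∑ j ∈ Finset.range (k + 1), m j] ζ ∈ E (k + 1) := by
  obtain ⟨ζ, hζ⟩ :=
    exists_mem_forall_iterate_sum_mem hf (hEc 0) (fun j => (hEc j).isClosed) hEne hcov
  exact ⟨ζ, hζ 0, fun k => hζ (k + 1)⟩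

/-- Covering lemma: if compact sets satisfy `E (j+1) ⊆ f^[m j] '' (E j)`, then there is a
point of `E 0` whose orbit visits every `E (k+1)` at time `p k = m 0 + ⋯ + m k`. -/
theorem exists_point_orbit_visits (f : ℂ → ℂ) (hf : Continuous f)
    (E : ℕ → Set ℂ) (hEc : ∀ j, IsCompact (E j)) (hEne : ∀ j, (E j).Nonempty)
    (m : ℕ → ℕ) (hm : ∀ j, 1 ≤ m j)
    (hcov : ∀ j, E (j + 1) ⊆ f^[m j] '' E j) :
    ∃ ζ ∈ E 0, ∀ k : ℕ, f^[∑ j ∈ Finset.range (k + 1), m j] ζ ∈ E (k + 1) :=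
  exists_point_orbit_visits_general f hf E hEc hEne m hcov
end

section
/- Let S ⊂ ℂ be a set with the property that for every bounded simply connected domain G ⊂ ℂ with G ∩ S ≠ ∅ one has ∂G ∩ S ≠ ∅. Then S ∪ {∞} is a connected subset of the Riemann sphere ℂ ∪ {∞}. -/
/-!
Suppose `T = S ∪ {∞}` splits into two relatively clopen pieces, with `∞` in the first. The
sphere is completely normal, so the bounded piece `B` has an open neighbourhood `V` whose closure
misses the other piece. The component of `V` through a point of `B`, with the holes of its
complement filled in, is a bounded simply connected domain meeting `S`; its boundary lies in
`∂V`, which does not meet `T` at all.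
-/

open Set Topology OnePoint

section ConnectedComponents

variable {X : Type*} [TopologicalSpace X]

theorem IsClosed.connectedComponentIn {K : Set X} (hK : IsClosed K) (p : X) :
    IsClosed (connectedComponentIn K p) := by
  by_cases hp : p ∈ K
  · exact isClosed_of_closure_subset <|
      isPreconnected_connectedComponentIn.closure.subset_connectedComponentIn
        (subset_closure (mem_connectedComponentIn hp))
        (closure_minimal (connectedComponentIn_subset K p) hK)
  · rw [connectedComponentIn_eq_empty hp]
    exact isClosed_empty

theorem separatedNhds_inter_of_inter_inter_eq_empty [CompletelyNormalSpace X] {s u v : Set X}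
    (hu : IsOpen u) (hv : IsOpen v) (hs : s ∩ (u ∩ v) = ∅) : SeparatedNhds (s ∩ u) (s ∩ v) := by
  have hsuv : Disjoint (s ∩ u) v := by rwa [disjoint_iff_inter_eq_empty, inter_assoc]
  have hsvu : Disjoint (s ∩ v) u := by
    rwa [disjoint_iff_inter_eq_empty, inter_assoc, inter_comm v]
  exact separatedNhds_iff_disjoint.2 <| completely_normal
    ((hsuv.closure_left hv).mono_right inter_subset_right)
    ((hsvu.closure_left hu).mono_right inter_subset_right).symm

variable [LocallyConnectedSpace X]

theorem interior_inter_closure_connectedComponentIn_subset (K : Set X) (p : X) :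
    interior K ∩ closure (connectedComponentIn K p) ⊆ interior (connectedComponentIn K p) := by
  rintro y ⟨hyK, hyC⟩
  have hN : IsOpen (connectedComponentIn (interior K) y) := isOpen_interior.connectedComponentIn
  obtain ⟨w, hwN, hwC⟩ := mem_closure_iff.1 hyC _ hN (mem_connectedComponentIn hyK)
  refine interior_maximal ?_ hN (mem_connectedComponentIn hyK)
  rw [connectedComponentIn_eq hwC]
  exact isPreconnected_connectedComponentIn.subset_connectedComponentIn hwN
    ((connectedComponentIn_subset _ _).trans interior_subset)

theorem frontier_connectedComponentIn_subset (K : Set X) (p : X) :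
    frontier (connectedComponentIn K p) ⊆ frontier K := fun _ ⟨hyC, hyI⟩ =>
  ⟨closure_mono (connectedComponentIn_subset K p) hyC,
    fun hyK => hyI (interior_inter_closure_connectedComponentIn_subset K p ⟨hyK, hyC⟩)⟩

theorem isPreconnected_compl_connectedComponentIn [ConnectedSpace X] {K : Set X}
    (hK : IsClosed K) (hKc : IsConnected Kᶜ) {p : X} (hp : p ∈ K) :
    IsPreconnected (connectedComponentIn K p)ᶜ := by
  set C := connectedComponentIn K p
  have hKcC : Kᶜ ⊆ Cᶜ := compl_subset_compl.2 (connectedComponentIn_subset K p)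
  obtain ⟨x, hx⟩ := hKc.nonempty
  refine isPreconnected_of_forall x fun y hy => ⟨connectedComponentIn Cᶜ y,
    connectedComponentIn_subset _ _, ?_, mem_connectedComponentIn hy,
    isPreconnected_connectedComponentIn⟩
  set Y := connectedComponentIn Cᶜ y
  suffices (Y ∩ Kᶜ).Nonempty by
    obtain ⟨w, hwY, hwK⟩ := this
    have hKY := hKc.isPreconnected.subset_connectedComponentIn hwK hKcC hx
    rwa [← connectedComponentIn_eq hwY] at hKY
  by_contra hYKc
  have hYK : Y ⊆ K := fun z hz => by_contra fun hzK => hYKc ⟨z, hz, hzK⟩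
  -- A boundary point `z` of `Y` lies in `C`, and then `Y ∪ {z}` is a connected subset of `K`
  -- through `z`, forcing `y ∈ C`.
  have hfr : frontier Y = ∅ := by
    refine eq_empty_iff_forall_notMem.2 fun z ⟨hzY, hzY'⟩ => ?_
    have hzC : z ∈ C := by_contra fun hzC => hzY' <|
      interior_inter_closure_connectedComponentIn_subset Cᶜ y
        ⟨(hK.connectedComponentIn p).isOpen_compl.interior_eq.symm ▸ hzC, hzY⟩
    have hYz : insert z Y ⊆ connectedComponentIn K z :=
      (isPreconnected_connectedComponentIn.subset_closure (subset_insert _ _)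
        (insert_subset hzY subset_closure)).subset_connectedComponentIn (mem_insert _ _)
        (insert_subset (connectedComponentIn_subset K p hzC) hYK)
    rw [← connectedComponentIn_eq hzC] at hYz
    exact hy (hYz (mem_insert_of_mem _ (mem_connectedComponentIn hy)))
  have hYuniv : Y = univ :=
    (isClopen_iff_frontier_eq_empty.2 hfr).eq_univ ⟨y, mem_connectedComponentIn hy⟩
  exact (connectedComponentIn_subset _ _ (hYuniv ▸ mem_univ p) : p ∈ Cᶜ)
    (mem_connectedComponentIn hp)

end ConnectedComponents

instance : LocallyConnectedSpace (OnePoint ℂ) :=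
  have : Fact (Module.finrank ℝ (EuclideanSpace ℝ (Fin 3)) = 2 + 1) := ⟨by simp⟩
  have := ChartedSpace.locallyConnectedSpace (EuclideanSpace ℝ (Fin 2))
    (Metric.sphere (0 : EuclideanSpace ℝ (Fin 3)) 1)
  (onePointEquivSphereOfFinrankEq (ι := Fin 3) (V := ℂ) (by simp)).locallyConnectedSpace

instance : T5Space (OnePoint ℂ) :=
  (onePointEquivSphereOfFinrankEq (ι := Fin 3) (V := ℂ) (by simp)).symm.t5Space

def IsBoundedSimplyConnectedDomain (G : Set ℂ) : Prop :=
  IsOpen G ∧ IsConnected G ∧ Bornology.IsBounded G ∧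
    IsConnected (((↑) : ℂ → OnePoint ℂ) '' G)ᶜ

/-- Fill in the holes of the component `G₀` of `V` through `x`: the domain is the complement of
the component of `∞` in the complement of `G₀`. -/
theorem exists_isBoundedSimplyConnectedDomain {V : Set (OnePoint ℂ)} (hV : IsOpen V)
    (hVinf : ∞ ∉ closure V) {x : ℂ} (hx : (x : OnePoint ℂ) ∈ V) :
    ∃ G, IsBoundedSimplyConnectedDomain G ∧ x ∈ G ∧ (↑) '' frontier G ⊆ frontier V := by
  set G₀ := connectedComponentIn V x
  set C := connectedComponentIn G₀ᶜ ∞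
  have hG₀ : IsOpen G₀ := hV.connectedComponentIn
  have hinfG₀ : ∞ ∈ interior G₀ᶜ := by
    rw [interior_compl]
    exact fun h => hVinf (closure_mono (connectedComponentIn_subset _ _) h)
  have hinfC : ∞ ∈ C := mem_connectedComponentIn (interior_subset hinfG₀)
  have hinfC' : ∞ ∈ interior C :=
    interior_inter_closure_connectedComponentIn_subset _ _ ⟨hinfG₀, subset_closure hinfC⟩
  have hG₀C : G₀ ⊆ Cᶜ := fun z hz hzC => connectedComponentIn_subset _ _ hzC hz
  have himage : (↑) '' ((↑) ⁻¹' Cᶜ : Set ℂ) = Cᶜ :=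
    image_preimage_eq_of_subset fun w hw =>
      ne_infty_iff_exists.1 fun hwinf => hw (hwinf ▸ hinfC)
  have hxG : x ∈ ((↑) ⁻¹' Cᶜ : Set ℂ) := hG₀C (mem_connectedComponentIn hx)
  refine ⟨(↑) ⁻¹' Cᶜ, ⟨?_, ⟨⟨x, hxG⟩, ?_⟩, ?_, ?_⟩, hxG, ?_⟩
  · exact (hG₀.isClosed_compl.connectedComponentIn ∞).isOpen_compl.preimage continuous_coe
  · rw [← isOpenEmbedding_coe.isInducing.isPreconnected_image, himage]
    refine isPreconnected_compl_connectedComponentIn hG₀.isClosed_compl ?_ (interior_subset hinfG₀)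
    rw [compl_compl]
    exact isConnected_connectedComponentIn_iff.2 hx
  · exact ((isOpen_iff_of_mem hinfC').1 isOpen_interior).2.isBounded.subset
      fun z hz hzC => hz (interior_subset hzC)
  · rw [himage, compl_compl]
    exact ⟨⟨∞, hinfC⟩, isPreconnected_connectedComponentIn⟩
  · rintro _ ⟨z, hz, rfl⟩
    rw [← isOpenMap_coe.preimage_frontier_eq_frontier_preimage continuous_coe, mem_preimage,
      frontier_compl] at hz
    have := frontier_connectedComponentIn_subset _ _ hz
    rw [frontier_compl] at this
    exact frontier_connectedComponentIn_subset _ _ this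

theorem subset_of_forall_isBoundedSimplyConnectedDomain {S : Set ℂ}
    (h : ∀ G, IsBoundedSimplyConnectedDomain G → (G ∩ S).Nonempty → (frontier G ∩ S).Nonempty)
    {u v : Set (OnePoint ℂ)} (hu : IsOpen u) (hv : IsOpen v)
    (hcov : (↑) '' S ∪ {∞} ⊆ u ∪ v) (hdisj : ((↑) '' S ∪ {∞}) ∩ (u ∩ v) = ∅) (hinf : ∞ ∈ u) :
    (↑) '' S ∪ {∞} ⊆ u := by
  intro t ht
  by_contra htu
  obtain ⟨x, hxS, rfl⟩ : t ∈ (↑) '' S := ht.resolve_right fun htinf => htu (htinf ▸ hinf)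
  obtain ⟨u', v', hu', hv', hAu', hBv', huv'⟩ :=
    separatedNhds_inter_of_inter_inter_eq_empty hu hv hdisj
  have hu'v' : Disjoint u' (closure v') := huv'.closure_right hu'
  obtain ⟨G, hG, hxG, hGV⟩ := exists_isBoundedSimplyConnectedDomain hv'
    (disjoint_left.1 hu'v' (hAu' ⟨Or.inr rfl, hinf⟩)) (hBv' ⟨ht, (hcov ht).resolve_left htu⟩)
  obtain ⟨z, hzG, hzS⟩ := h G hG ⟨x, hxG, hxS⟩
  have hz : (z : OnePoint ℂ) ∈ frontier v' := hGV (mem_image_of_mem _ hzG)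
  have hzT : (z : OnePoint ℂ) ∈ (↑) '' S ∪ {∞} := Or.inl (mem_image_of_mem _ hzS)
  rcases hcov hzT with hzu | hzv
  · exact disjoint_left.1 hu'v' (hAu' ⟨hzT, hzu⟩) (frontier_subset_closure hz)
  · exact (hv'.frontier_eq ▸ hz).2 (hBv' ⟨hzT, hzv⟩)

open OnePoint in
/-- If every bounded simply connected domain meeting `S` has boundary meeting `S`,
then `S ∪ {∞}` is connected in the Riemann sphere `ℂ ∪ {∞}`. -/
theorem union_infty_connected_of_boundary_property (S : Set ℂ)
    (h : ∀ G : Set ℂ, IsOpen G → IsConnected G → Bornology.IsBounded G →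
      IsConnected ((((↑) : ℂ → OnePoint ℂ) '' G)ᶜ) →
      (G ∩ S).Nonempty → (frontier G ∩ S).Nonempty) :
    IsConnected ((((↑) : ℂ → OnePoint ℂ) '' S) ∪ {(∞ : OnePoint ℂ)}) := by
  have hS : ∀ G, IsBoundedSimplyConnectedDomain G → (G ∩ S).Nonempty →
      (frontier G ∩ S).Nonempty := fun G ⟨hG, hGc, hGb, hGs⟩ => h G hG hGc hGb hGs
  refine ⟨⟨∞, Or.inr rfl⟩, isPreconnected_iff_subset_of_disjoint.2 fun u v hu hv hcov hdisj => ?_⟩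
  rcases hcov (Or.inr rfl) with hinf | hinf
  · exact Or.inl (subset_of_forall_isBoundedSimplyConnectedDomain hS hu hv hcov hdisj hinf)
  · refine Or.inr (subset_of_forall_isBoundedSimplyConnectedDomain hS hv hu ?_ ?_ hinf)
    · exact fun t ht => (hcov ht).symm
    · rwa [inter_comm v]
end

section
/- Let S ⊂ ℂ be such that S ∪ {∞} is connected in the Riemann sphere. Then for every bounded simply connected domain G ⊂ ℂ with G ∩ S ≠ ∅, the boundary ∂G meets S. -/
/-!
The frontier of a bounded set `G ⊆ ℂ` is also its frontier in the Riemann sphere, since the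
compact set `closure G` stays closed there. The connected set `S ∪ {∞}` contains a point of `G`
and the point `∞ ∉ G`, so it meets the frontier of `G`, necessarily at a point of `S`.
-/

open Set

theorem IsPreconnected.inter_frontier_nonempty {α : Type*} [TopologicalSpace α] {s u : Set α}
    (hs : IsPreconnected s) (hsu : (s ∩ u).Nonempty) (hsu' : (s \ u).Nonempty) :
    (s ∩ frontier u).Nonempty := by
  by_contra! hfr
  have hcover : s ⊆ interior u ∪ (closure u)ᶜ := fun x hx => by
    by_cases hxu : x ∈ interior u
    · exact Or.inl hxu
    · exact Or.inr fun hcl => hfr.subset ⟨hx, hcl, hxu⟩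
  have hin : (s ∩ interior u).Nonempty := by
    obtain ⟨x, hxs, hxu⟩ := hsu
    exact ⟨x, hxs, (hcover hxs).resolve_right (not_not.2 (subset_closure hxu))⟩
  have hout : (s ∩ (closure u)ᶜ).Nonempty := by
    obtain ⟨x, hxs, hxu⟩ := hsu'
    exact ⟨x, hxs, (hcover hxs).resolve_left fun hxi => hxu (interior_subset hxi)⟩
  obtain ⟨x, -, hxi, hxc⟩ :=
    hs _ _ isOpen_interior isClosed_closure.isOpen_compl hcover hin hout
  exact hxc (interior_subset_closure hxi)

namespace OnePoint

variable {X : Type*} [TopologicalSpace X] {s : Set X}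

theorem closure_image_coe_of_isCompact_closure (hs : IsCompact (closure s)) :
    closure ((↑) '' s : Set (OnePoint X)) = (↑) '' closure s :=
  (closure_minimal (image_mono subset_closure)
      (isClosed_image_coe.2 ⟨isClosed_closure, hs⟩)).antisymm
    (image_closure_subset_closure_image continuous_coe)

theorem frontier_image_coe_of_isCompact_closure (hs : IsCompact (closure s)) :
    frontier ((↑) '' s : Set (OnePoint X)) = (↑) '' frontier s := by
  have hrange : frontier ((↑) '' s : Set (OnePoint X)) ⊆ range ((↑) : X → OnePoint X) := by
    rw [frontier, closure_image_coe_of_isCompact_closure hs]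
    exact sdiff_subset.trans (image_subset_range _ _)
  rw [← image_preimage_eq_of_subset hrange,
    isOpenMap_coe.preimage_frontier_eq_frontier_preimage continuous_coe,
    preimage_image_eq _ coe_injective]

end OnePoint

open OnePoint in
theorem boundary_property_of_union_infty_connected_general (S : Set ℂ)
    (h : IsConnected ((((↑) : ℂ → OnePoint ℂ) '' S) ∪ {(∞ : OnePoint ℂ)}))
    (G : Set ℂ) (hGb : Bornology.IsBounded G)
    (hGS : (G ∩ S).Nonempty) :
    (frontier G ∩ S).Nonempty := by
  have hmeet : (((↑) '' S ∪ {∞}) ∩ ((↑) '' G : Set (OnePoint ℂ))).Nonempty := by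
    obtain ⟨z, hzG, hzS⟩ := hGS
    exact ⟨z, Or.inl (mem_image_of_mem _ hzS), mem_image_of_mem _ hzG⟩
  obtain ⟨p, hpS, hpG⟩ := h.isPreconnected.inter_frontier_nonempty hmeet
    ⟨∞, Or.inr rfl, infty_notMem_image_coe⟩
  rw [frontier_image_coe_of_isCompact_closure hGb.isCompact_closure] at hpG
  obtain ⟨z, hzG, rfl⟩ := hpG
  rcases hpS with ⟨w, hwS, hwz⟩ | hz
  · exact ⟨z, hzG, coe_injective hwz ▸ hwS⟩
  · exact absurd hz (coe_ne_infty z)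

open OnePoint in
/-- If `S ∪ {∞}` is connected in the Riemann sphere, then every bounded simply connected
domain meeting `S` has boundary meeting `S`. -/
theorem boundary_property_of_union_infty_connected (S : Set ℂ)
    (h : IsConnected ((((↑) : ℂ → OnePoint ℂ) '' S) ∪ {(∞ : OnePoint ℂ)}))
    (G : Set ℂ) (hGo : IsOpen G) (hGc : IsConnected G) (hGb : Bornology.IsBounded G)
    (hGsc : IsConnected ((((↑) : ℂ → OnePoint ℂ) '' G)ᶜ))
    (hGS : (G ∩ S).Nonempty) :
    (frontier G ∩ S).Nonempty :=
  boundary_property_of_union_infty_connected_general S h G hGb hGS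
end

section
/- For the entire function f(z) = -10 z e^{-z} - z/2, there is no r > 0 such that the iterated minimum modulus m^n(r) tends to ∞ as n → ∞. -/
/-!
On the positive real axis `|f(s)| = s/2 + 10 s e^{-s} ≤ s` as soon as `e^s ≥ 20`, so `m(s) ≤ s` for
all large `s`. An orbit tending to `∞` would eventually stay in that region, where it is
non-increasing, hence bounded: a contradiction.
-/

/-- The minimum modulus function `m(r) = min {|f z| : |z| = r}`. -/
noncomputable def minMod (f : ℂ → ℂ) (r : ℝ) : ℝ :=
  sInf ((fun z => ‖f z‖) '' Metric.sphere (0 : ℂ) r)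

open Filter

theorem Filter.not_tendsto_iterate_atTop_of_eventually_le {α : Type*} [Preorder α] [NoMaxOrder α]
    {g : α → α} (hg : ∀ᶠ x in atTop, g x ≤ x) (x : α) :
    ¬ Tendsto (fun n => g^[n] x) atTop atTop := by
  intro htend
  obtain ⟨N, hN⟩ := (htend.eventually hg).exists_forall_of_atTop
  have hanti : Antitone fun n => g^[n + N] x := antitone_nat_of_succ_le fun n => by
    simpa only [add_right_comm n 1 N, Function.iterate_succ_apply'] using
      hN (n + N) (Nat.le_add_left _ _)
  obtain ⟨b, hb⟩ := exists_gt (g^[N] x)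
  obtain ⟨n, hn⟩ := (((tendsto_add_atTop_iff_nat N).2 htend).eventually_ge_atTop b).exists
  have hle : g^[n + N] x ≤ g^[0 + N] x := hanti n.zero_le
  rw [zero_add] at hle
  exact lt_irrefl _ (hb.trans_le (hn.trans hle))

theorem minMod_norm_le (f : ℂ → ℂ) (z : ℂ) : minMod f ‖z‖ ≤ ‖f z‖ :=
  csInf_le ⟨0, by rintro _ ⟨w, -, rfl⟩; exact norm_nonneg _⟩ ⟨z, by simp, rfl⟩

theorem minMod_le_self_of_twenty_le_exp {s : ℝ} (hs : 0 ≤ s) (h20 : 20 ≤ Real.exp s) :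
    minMod (fun z => -10 * z * Complex.exp (-z) - z / 2) s ≤ s := by
  have hreal : -10 * (s : ℂ) * Complex.exp (-s) - s / 2 =
      ((-(s / 2 + 10 * s * Real.exp (-s)) : ℝ) : ℂ) := by
    push_cast [Complex.ofReal_exp]
    ring
  have htail : 10 * s * Real.exp (-s) ≤ s / 2 := by
    have : 20 * Real.exp (-s) ≤ 1 := by
      rw [Real.exp_neg, ← div_eq_mul_inv, div_le_one (Real.exp_pos s)]
      exact h20
    nlinarith
  calc minMod (fun z => -10 * z * Complex.exp (-z) - z / 2) s
      = minMod (fun z => -10 * z * Complex.exp (-z) - z / 2) ‖(s : ℂ)‖ := by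
        rw [Complex.norm_real, Real.norm_of_nonneg hs]
    _ ≤ ‖-10 * (s : ℂ) * Complex.exp (-s) - s / 2‖ := minMod_norm_le _ _
    _ = s / 2 + 10 * s * Real.exp (-s) := by
        rw [hreal, Complex.norm_real, norm_neg, Real.norm_of_nonneg (by positivity)]
    _ ≤ s := by linarith

/-- For `f z = -10 z e^{-z} - z/2`, there is no `r > 0` with `m^[n] r → ∞`. -/
theorem no_iterated_minMod_tendsto_atTop :
    ¬ ∃ r > (0 : ℝ),
      Filter.Tendsto
        (fun n : ℕ => (minMod (fun z => -10 * z * Complex.exp (-z) - z / 2))^[n] r)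
        Filter.atTop Filter.atTop := by
  rintro ⟨r, -, htend⟩
  refine not_tendsto_iterate_atTop_of_eventually_le ?_ r htend
  filter_upwards [eventually_ge_atTop 0, Real.tendsto_exp_atTop.eventually_ge_atTop 20]
    with s hs h20
  exact minMod_le_self_of_twenty_le_exp hs h20
end

section
/- Let f : ℝ → ℝ be defined by f(x) = x + cos x. Then for every x ∈ ℝ the orbit (f^n(x))_{n∈ℕ} is bounded. -/
/-! Since `sin ≤ 1`, the map `t ↦ t + cos t` is monotone, and a monotone map sends the interval
between two of its fixed points into itself. The fixed points are the zeros of `cos`, which lie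
at most `π` apart, so every `x` lies between two of them. -/

open Real Set Function

theorem Monotone.iterate_mem_Icc_of_isFixedPt {α : Type*} [Preorder α] {f : α → α}
    (hf : Monotone f) {a b x : α} (ha : IsFixedPt f a) (hb : IsFixedPt f b) (hx : x ∈ Icc a b)
    (n : ℕ) : f^[n] x ∈ Icc a b := by
  have hmaps : MapsTo f (Icc a b) (Icc a b) := by
    simpa only [ha.eq, hb.eq] using hf.mapsTo_Icc (a := a) (b := b)
  exact hmaps.iterate n hx

theorem monotone_add_cos : Monotone fun t : ℝ => t + cos t := by
  have hderiv (t : ℝ) : HasDerivAt (fun t : ℝ => t + cos t) (1 - sin t) t := by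
    simpa only [sub_eq_add_neg] using (hasDerivAt_id' t).fun_add (hasDerivAt_cos t)
  refine monotone_of_deriv_nonneg (fun t => (hderiv t).differentiableAt) fun t => ?_
  rw [(hderiv t).deriv]
  linarith [sin_le_one t]

theorem isFixedPt_add_cos_iff {x : ℝ} : IsFixedPt (fun t : ℝ => t + cos t) x ↔ cos x = 0 := by
  simp only [IsFixedPt, add_eq_left]

theorem exists_cos_eq_zero_mem_Icc (x : ℝ) : ∃ a b, cos a = 0 ∧ cos b = 0 ∧ x ∈ Icc a b := by
  set k := ⌊x / π⌋
  have hk : (k : ℝ) * π ≤ x ∧ x < (k + 1) * π := by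
    constructor
    · rw [← le_div_iff₀ pi_pos]; exact Int.floor_le _
    · rw [← div_lt_iff₀ pi_pos]; exact Int.lt_floor_add_one _
  refine ⟨(2 * (k - 1 : ℤ) + 1) * π / 2, (2 * (k + 1 : ℤ) + 1) * π / 2,
    cos_eq_zero_iff.mpr ⟨_, rfl⟩, cos_eq_zero_iff.mpr ⟨_, rfl⟩, ?_, ?_⟩ <;>
  · push_cast; nlinarith [pi_pos]

/-- For `f x = x + cos x` on `ℝ`, every orbit is bounded. -/
theorem orbit_bounded_cos_add (x : ℝ) :
    Bornology.IsBounded (Set.range fun n : ℕ => (fun t : ℝ => t + Real.cos t)^[n] x) := by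
  obtain ⟨a, b, ha, hb, hx⟩ := exists_cos_eq_zero_mem_Icc x
  refine (Metric.isBounded_Icc a b).subset (range_subset_iff.mpr fun n => ?_)
  exact monotone_add_cos.iterate_mem_Icc_of_isFixedPt (isFixedPt_add_cos_iff.mpr ha)
    (isFixedPt_add_cos_iff.mpr hb) hx n
end

section
/- Let f : ℂ → ℂ be continuous, and suppose there exists a sequence of bounded, simply connected domains (D_n)_{n∈ℕ} such that (a) f(∂D_n) surrounds D_{n+1} for each n (i.e., D_{n+1} lies in a bounded component of the complement of f(∂D_n)), and (b) every disc centred at 0 is contained in D_n for all sufficiently large n. Suppose further that for some j there is a continuum Γ ⊂ K(f) ∩ (ℂ \ D_{n_j}) containing a point z ∈ ∂D_{n_j} and a point z' with f^n(z') ∈ D_{n_j + n} for all n ≥ 1. Then there exists n_{j+1} > n_j and a continuum Γ' ⊆ f^{n_{j+1} - n_j}(Γ) with Γ' ⊂ K(f) ∩ (ℂ \ D_{n_{j+1}}), Γ' ∩ ∂D_{n_{j+1}} ≠ ∅, and a point w' ∈ Γ' with f^n(w') ∈ D_{n_{j+1}+n} for all n ≥ 1. -/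
/-- `A` surrounds `B` if `B` lies in a bounded connected component of `ℂ \ A`. -/
def Surrounds (A B : Set ℂ) : Prop :=
  ∃ z ∈ Aᶜ, Bornology.IsBounded (connectedComponentIn Aᶜ z) ∧
    B ⊆ connectedComponentIn Aᶜ z

/-- The set of points with bounded orbit under `f`. -/
def Kset (f : ℂ → ℂ) : Set ℂ :=
  {z : ℂ | Bornology.IsBounded (Set.range fun n : ℕ => f^[n] z)}

open Set

/-!
Since `z ∈ ∂D_{n_j}`, the point `f z` lies on `f(∂D_{n_j})` and hence outside `D_{n_j+1}`, while
the bounded orbit of `z` eventually stays inside the exhausting domains. Let `k ≥ 1` be the last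
time with `f^k z ∉ D_{n_j+k}` and put `n_{j+1} = n_j + k`. The continuum `f^k(Γ)` meets
`D_{n_{j+1}}` (at `f^k z'`) and contains `w' = f^k z` outside it, so by boundary bumping the
component of `w'` in `f^k(Γ) \ D_{n_{j+1}}` reaches `∂D_{n_{j+1}}`. By the choice of `k`, the
orbit of `w'` then runs through the domains.
-/

lemma Surrounds.disjoint {A B : Set ℂ} (h : Surrounds A B) : Disjoint A B := by
  obtain ⟨_, _, _, hB⟩ := h
  exact disjoint_compl_right.mono_right (hB.trans (connectedComponentIn_subset _ _))

lemma iterate_mem_Kset {f : ℂ → ℂ} (k : ℕ) {a : ℂ} (ha : a ∈ Kset f) : f^[k] a ∈ Kset f := by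
  simp only [Kset, mem_ofPred_eq] at ha ⊢
  refine ha.subset ?_
  rintro _ ⟨n, rfl⟩
  exact ⟨n + k, Function.iterate_add_apply f n k a⟩

lemma exists_forall_subset_of_isBounded {D : ℕ → Set ℂ}
    (hb : ∀ R > (0 : ℝ), ∃ N : ℕ, ∀ n ≥ N, Metric.ball (0 : ℂ) R ⊆ D n)
    {S : Set ℂ} (hS : Bornology.IsBounded S) : ∃ N : ℕ, ∀ n ≥ N, S ⊆ D n := by
  obtain ⟨R, hR, hSR⟩ := hS.subset_ball_lt 0 0
  obtain ⟨N, hN⟩ := hb R hR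
  exact ⟨N, fun n hn => hSR.trans (hN n hn)⟩

lemma Nat.exists_last_not_of_eventually {P : ℕ → Prop} {m N : ℕ} (hm : ¬P m)
    (hN : ∀ n ≥ N, P n) : ∃ k ≥ m, ¬P k ∧ ∀ n > k, P n := by
  classical
  have hmN : m ≤ N := by by_contra! h; exact hm (hN m h.le)
  refine ⟨Nat.findGreatest (¬P ·) N, Nat.le_findGreatest hmN hm,
    Nat.findGreatest_spec (P := (¬P ·)) hmN hm, fun n hn => ?_⟩
  rcases le_or_gt n N with hnN | hnN
  · exact not_not.mp (Nat.findGreatest_is_greatest hn hnN)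
  · exact hN n hnN.le

lemma IsCompact.connectedComponentIn {α : Type*} [TopologicalSpace α] {F : Set α}
    (hF : IsCompact F) (x : α) : IsCompact (connectedComponentIn F x) := by
  by_cases hx : x ∈ F
  · rw [connectedComponentIn_eq_image hx]
    have : CompactSpace F := isCompact_iff_compactSpace.mp hF
    exact isClosed_connectedComponent.isCompact.image continuous_subtype_val
  · rw [connectedComponentIn_eq_empty hx]
    exact isCompact_empty

lemma exists_isClopen_disjoint_of_disjoint_connectedComponent {α : Type*} [TopologicalSpace α]
    [T2Space α] [CompactSpace α] {x : α} {K : Set α} (hK : IsClosed K)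
    (h : Disjoint (connectedComponent x) K) : ∃ V, IsClopen V ∧ x ∈ V ∧ Disjoint V K := by
  rw [connectedComponent_eq_iInter_isClopen, disjoint_iff_inter_eq_empty, inter_comm] at h
  obtain ⟨t, ht⟩ := hK.isCompact.elim_finite_subfamily_closed _
    (fun s : { s : Set α // IsClopen s ∧ x ∈ s } => s.2.1.1) h
  refine ⟨⋂ s ∈ t, s.1, isClopen_biInter_finset fun s _ => s.2.1,
    mem_iInter₂.2 fun s _ => s.2.2, ?_⟩
  rw [disjoint_iff_inter_eq_empty, inter_comm, ht]

/-- The boundary bumping theorem. -/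
theorem connectedComponentIn_inter_compl_inter_frontier_nonempty {α : Type*}
    [TopologicalSpace α] [T2Space α] {X U : Set α} (hXc : IsCompact X) (hX : IsPreconnected X)
    (hU : IsOpen U) (hXU : (X ∩ U).Nonempty) {w : α} (hwX : w ∈ X) (hwU : w ∉ U) :
    (connectedComponentIn (X ∩ Uᶜ) w ∩ frontier U).Nonempty := by
  set F := X ∩ Uᶜ
  have : CompactSpace F := isCompact_iff_compactSpace.mp (hXc.inter_right hU.isClosed_compl)
  have hwF : w ∈ F := ⟨hwX, hwU⟩
  by_contra hCU
  have hC : Disjoint (connectedComponent (⟨w, hwF⟩ : F))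
      (((↑) : F → α) ⁻¹' closure U) := by
    rw [disjoint_iff_forall_ne]
    rintro ⟨x, hxX, hxU⟩ hx y hy rfl
    refine hCU ⟨x, ?_, hU.frontier_eq ▸ ⟨hy, hxU⟩⟩
    rw [connectedComponentIn_eq_image hwF]
    exact mem_image_of_mem _ hx
  obtain ⟨V, hV, hwV, hVU⟩ := exists_isClopen_disjoint_of_disjoint_connectedComponent
    (isClosed_closure.preimage continuous_subtype_val) hC
  obtain ⟨O, hO, hOV⟩ := isOpen_induced_iff.mp hV.isOpen
  have hVO : ∀ y : F, y ∈ V ↔ (y : α) ∈ O := fun y => by rw [← hOV]; rfl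
  -- `V` is relatively clopen in `X`: closed as a compact set, and cut out of `X` by `O \ closure U`
  set W : Set α := (↑) '' V
  have hW : IsClosed W := (hV.isClosed.isCompact.image continuous_subtype_val).isClosed
  have hWO : W ⊆ O \ closure U := by
    rintro _ ⟨y, hy, rfl⟩
    exact ⟨(hVO y).1 hy, fun h => disjoint_left.mp hVU hy h⟩
  have hXOW : X ∩ (O \ closure U) ⊆ W := fun x ⟨hxX, hxO, hxU⟩ =>
    ⟨⟨x, hxX, fun h => hxU (subset_closure h)⟩, (hVO _).2 hxO, rfl⟩
  obtain ⟨d, hdX, hdU⟩ := hXU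
  obtain ⟨x, hxX, hxO, hxW⟩ := hX (O \ closure U) Wᶜ (hO.sdiff isClosed_closure) hW.isOpen_compl
    (fun x hx => (em (x ∈ W)).imp (hWO ·) id) ⟨w, hwX, hWO ⟨_, hwV, rfl⟩⟩
    ⟨d, hdX, fun ⟨y, _, hy⟩ => y.2.2 (hy ▸ hdU)⟩
  exact hxW (hXOW ⟨hxX, hxO⟩)

theorem key_induction_step_general (f : ℂ → ℂ) (hf : Continuous f) (D : ℕ → Set ℂ)
    (hD : ∀ n, IsOpen (D n) ∧ IsConnected (D n) ∧ Bornology.IsBounded (D n) ∧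
      IsConnected ((((↑) : ℂ → OnePoint ℂ) '' D n)ᶜ))
    (ha : ∀ n, Surrounds (f '' frontier (D n)) (D (n + 1)))
    (hb : ∀ R > (0 : ℝ), ∃ N : ℕ, ∀ n ≥ N, Metric.ball (0 : ℂ) R ⊆ D n)
    (nj : ℕ) (Γ : Set ℂ) (hΓc : IsCompact Γ) (hΓconn : IsConnected Γ)
    (hΓsub : Γ ⊆ Kset f ∩ (D nj)ᶜ)
    (z : ℂ) (hz : z ∈ Γ ∩ frontier (D nj))
    (z' : ℂ) (hz' : z' ∈ Γ) (hz'orb : ∀ n : ℕ, 1 ≤ n → f^[n] z' ∈ D (nj + n)) :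
    ∃ n' > nj, ∃ Γ' : Set ℂ, Γ' ⊆ f^[n' - nj] '' Γ ∧ Γ'.Nonempty ∧
      IsCompact Γ' ∧ IsConnected Γ' ∧ Γ' ⊆ Kset f ∩ (D n')ᶜ ∧
      (Γ' ∩ frontier (D n')).Nonempty ∧
      ∃ w' ∈ Γ', ∀ n : ℕ, 1 ≤ n → f^[n] w' ∈ D (n' + n) := by
  obtain ⟨hzΓ, hzfr⟩ := hz
  have hfz : f^[1] z ∉ D (nj + 1) :=
    fun h => (ha nj).disjoint.ne_of_mem (mem_image_of_mem f hzfr) h rfl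
  obtain ⟨N, hN⟩ := exists_forall_subset_of_isBounded hb (hΓsub hzΓ).1
  obtain ⟨k, hk1, hkout, hkin⟩ :=
    Nat.exists_last_not_of_eventually (P := fun k => f^[k] z ∈ D (nj + k)) hfz (N := N)
      fun n hn => hN (nj + n) (by omega) (mem_range_self n)
  set X := f^[k] '' Γ
  set F := X ∩ (D (nj + k))ᶜ
  have hwF : f^[k] z ∈ F := ⟨mem_image_of_mem _ hzΓ, hkout⟩
  have hXK : X ⊆ Kset f := by
    rintro _ ⟨a, haΓ, rfl⟩
    exact iterate_mem_Kset k (hΓsub haΓ).1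
  have hXc : IsCompact X := hΓc.image (hf.iterate k)
  refine ⟨nj + k, by omega, connectedComponentIn F (f^[k] z), ?_,
    ⟨_, mem_connectedComponentIn hwF⟩,
    (hXc.inter_right (hD _).1.isClosed_compl).connectedComponentIn _,
    isConnected_connectedComponentIn_iff.mpr hwF, ?_, ?_, _, mem_connectedComponentIn hwF, ?_⟩
  · rw [Nat.add_sub_cancel_left]
    exact (connectedComponentIn_subset _ _).trans inter_subset_left
  · exact (connectedComponentIn_subset _ _).trans (inter_subset_inter_left _ hXK)
  · exact connectedComponentIn_inter_compl_inter_frontier_nonempty hXc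
      (hΓconn.image _ (hf.iterate k).continuousOn).isPreconnected (hD _).1
      ⟨_, mem_image_of_mem _ hz', hz'orb k hk1⟩ hwF.1 hwF.2
  · intro n hn
    rw [← Function.iterate_add_apply, add_assoc, add_comm k]
    exact hkin (n + k) (by omega)

/-- Key induction step (Lemma 3.2): given the sequence of domains `D n` and a continuum
`Γ ⊆ K(f) \ D (n_j)` meeting `∂D (n_j)` and containing a point whose orbit runs through
the domains, there is `n_{j+1} > n_j` and a continuum `Γ' ⊆ f^[n_{j+1} - n_j] '' Γ`
with the same properties at level `n_{j+1}`. -/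
theorem key_induction_step (f : ℂ → ℂ) (hf : Continuous f) (D : ℕ → Set ℂ)
    (hD : ∀ n, IsOpen (D n) ∧ IsConnected (D n) ∧ Bornology.IsBounded (D n) ∧
      IsConnected ((((↑) : ℂ → OnePoint ℂ) '' D n)ᶜ))
    (ha : ∀ n, Surrounds (f '' frontier (D n)) (D (n + 1)))
    (hb : ∀ R > (0 : ℝ), ∃ N : ℕ, ∀ n ≥ N, Metric.ball (0 : ℂ) R ⊆ D n)
    (nj : ℕ) (Γ : Set ℂ) (hΓne : Γ.Nonempty) (hΓc : IsCompact Γ) (hΓconn : IsConnected Γ)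
    (hΓsub : Γ ⊆ Kset f ∩ (D nj)ᶜ)
    (z : ℂ) (hz : z ∈ Γ ∩ frontier (D nj))
    (z' : ℂ) (hz' : z' ∈ Γ) (hz'orb : ∀ n : ℕ, 1 ≤ n → f^[n] z' ∈ D (nj + n)) :
    ∃ n' > nj, ∃ Γ' : Set ℂ, Γ' ⊆ f^[n' - nj] '' Γ ∧ Γ'.Nonempty ∧
      IsCompact Γ' ∧ IsConnected Γ' ∧ Γ' ⊆ Kset f ∩ (D n')ᶜ ∧
      (Γ' ∩ frontier (D n')).Nonempty ∧
      ∃ w' ∈ Γ', ∀ n : ℕ, 1 ≤ n → f^[n] w' ∈ D (n' + n) :=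
  key_induction_step_general f hf D hD ha hb nj Γ hΓc hΓconn hΓsub z hz z' hz' hz'orb
end

section
/- Let f : ℂ → ℂ be an entire function such that the minimum modulus m(r) = min{|f(z)| : |z| = r} satisfies m^n(r₀) → ∞ as n → ∞ for some r₀ > 0, and suppose f has a point of period 2 (a point w with f(f(w)) = w, and hence bounded orbit). Then there exists N ∈ ℕ such that, with D_n := {z : |z| < m^{n+N}(r₀)}, the image f(∂D_n) surrounds D_{n+1} for every n ≥ 0, and every disc centred at 0 is contained in D_n for all sufficiently large n. -/
/-!
Since `m^n(r₀) → ∞`, `f` is not constant, so it is an open map. Choose `N` with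
`R_n := m^{n+N}(r₀) > |f 0|` for all `n`. The curve `f(∂D_n)` avoids the disc of radius
`R_{n+1} = m(R_n)`, which contains `f 0`; and the component of its complement containing
`f 0` cannot leave the open set `f(D_n)`, since `f(D_n)` is also relatively closed in that
complement: its closure lies in the compact set `f(closure D_n) = f(D_n) ∪ f(∂D_n)`.
-/

open Set Metric Filter

lemma connectedComponentIn_compl_image_frontier_subset {X Y : Type*} [TopologicalSpace X]
    [TopologicalSpace Y] [T2Space Y] {f : X → Y} (hcont : Continuous f) (hopen : IsOpenMap f)
    {s : Set X} (hs : IsCompact (closure s)) {y : Y} (hy : y ∈ f '' interior s) :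
    connectedComponentIn (f '' frontier s)ᶜ y ⊆ f '' interior s := by
  by_cases hyA : y ∈ f '' frontier s
  · rw [connectedComponentIn_eq_empty (notMem_compl_iff.2 hyA)]; exact empty_subset _
  have hK : IsClosed (f '' closure s) := (hs.image hcont).isClosed
  refine isPreconnected_connectedComponentIn.subset_left_of_subset_union
    (hopen _ isOpen_interior) hK.isOpen_compl
    (disjoint_compl_right_iff_subset.2 (image_mono interior_subset_closure)) ?_
    ⟨y, mem_connectedComponentIn hyA, hy⟩
  intro z hz
  by_cases hzK : z ∈ f '' closure s
  · obtain ⟨x, hx, rfl⟩ := hzK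
    rw [closure_eq_interior_union_frontier] at hx
    refine hx.elim (fun hx => Or.inl ⟨x, hx, rfl⟩) fun hx => ?_
    exact absurd ⟨x, hx, rfl⟩ (connectedComponentIn_subset _ _ hz)
  · exact Or.inr hzK

lemma isBounded_connectedComponentIn_compl_image_frontier {X Y : Type*}
    [PseudoMetricSpace X] [ProperSpace X] [MetricSpace Y] {f : X → Y} (hcont : Continuous f)
    (hopen : IsOpenMap f) {s : Set X} (hs : Bornology.IsBounded s) {y : Y}
    (hy : y ∈ f '' interior s) :
    Bornology.IsBounded (connectedComponentIn (f '' frontier s)ᶜ y) :=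
  ((hs.isCompact_closure.image hcont).isBounded.subset (image_mono interior_subset_closure)).subset
    (connectedComponentIn_compl_image_frontier_subset hcont hopen hs.isCompact_closure hy)

lemma minMod_le_norm (f : ℂ → ℂ) {r : ℝ} {z : ℂ} (hz : z ∈ sphere (0 : ℂ) r) :
    minMod f r ≤ ‖f z‖ :=
  csInf_le ⟨0, by rintro _ ⟨_, -, rfl⟩; exact norm_nonneg _⟩ ⟨z, hz, rfl⟩

lemma minMod_const_le (c : ℂ) (r : ℝ) : minMod (fun _ => c) r ≤ ‖c‖ := by
  rcases (sphere (0 : ℂ) r).eq_empty_or_nonempty with h | ⟨z, hz⟩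
  · simp [minMod, h]
  · exact minMod_le_norm _ hz

lemma not_tendsto_iterate_minMod_const (c : ℂ) (r₀ : ℝ) :
    ¬ Tendsto (fun n : ℕ => (minMod fun _ => c)^[n] r₀) atTop atTop := fun h => by
  obtain ⟨n, hn⟩ := (((tendsto_add_atTop_iff_nat 1).2 h).eventually_gt_atTop ‖c‖).exists
  rw [Function.iterate_succ_apply'] at hn
  exact hn.not_ge (minMod_const_le c _)

lemma isOpenMap_of_tendsto_iterate_minMod {f : ℂ → ℂ} (hf : Differentiable ℂ f) {r₀ : ℝ}
    (htend : Tendsto (fun n : ℕ => (minMod f)^[n] r₀) atTop atTop) : IsOpenMap f := by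
  refine (AnalyticOnNhd.is_constant_or_isOpenMap fun z _ => hf.analyticAt z).resolve_left ?_
  rintro ⟨c, hc⟩
  obtain rfl : f = fun _ => c := funext hc
  exact not_tendsto_iterate_minMod_const c r₀ htend

lemma ball_minMod_subset_compl_image_frontier (f : ℂ → ℂ) (r : ℝ) :
    ball (0 : ℂ) (minMod f r) ⊆ (f '' frontier (ball 0 r))ᶜ := by
  rintro y hy ⟨z, hz, rfl⟩
  exact (mem_ball_zero_iff.1 hy).not_ge (minMod_le_norm f (frontier_ball_subset_sphere hz))

lemma surrounds_ball_minMod {f : ℂ → ℂ} (hcont : Continuous f) (hopen : IsOpenMap f) {r : ℝ}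
    (hr : 0 < r) (hf0 : ‖f 0‖ < minMod f r) :
    Surrounds (f '' frontier (ball 0 r)) (ball 0 (minMod f r)) := by
  have hf0_mem : f 0 ∈ ball (0 : ℂ) (minMod f r) := mem_ball_zero_iff.2 hf0
  have hball := ball_minMod_subset_compl_image_frontier f r
  refine ⟨f 0, hball hf0_mem, ?_, (convex_ball _ _).isPreconnected.subset_connectedComponentIn
    hf0_mem hball⟩
  refine isBounded_connectedComponentIn_compl_image_frontier hcont hopen isBounded_ball ?_
  exact ⟨0, by rw [isOpen_ball.interior_eq]; exact mem_ball_self hr, rfl⟩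

theorem minMod_gives_surrounding_domains_general (f : ℂ → ℂ) (hf : Differentiable ℂ f)
    (r₀ : ℝ)
    (htend : Filter.Tendsto (fun n : ℕ => (minMod f)^[n] r₀) Filter.atTop Filter.atTop) :
    ∃ N : ℕ,
      (∀ n : ℕ,
        Surrounds (f '' frontier (Metric.ball (0 : ℂ) ((minMod f)^[n + N] r₀)))
          (Metric.ball (0 : ℂ) ((minMod f)^[n + 1 + N] r₀))) ∧
      ∀ R > (0 : ℝ), ∃ M : ℕ, ∀ n ≥ M,
        Metric.ball (0 : ℂ) R ⊆ Metric.ball (0 : ℂ) ((minMod f)^[n + N] r₀) := by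
  have hopen := isOpenMap_of_tendsto_iterate_minMod hf htend
  obtain ⟨N, hN⟩ := (htend.eventually_gt_atTop ‖f 0‖).exists_forall_of_atTop
  refine ⟨N, fun n => ?_, fun R _ => ?_⟩
  · have hstep : (minMod f)^[n + 1 + N] r₀ = minMod f ((minMod f)^[n + N] r₀) := by
      rw [show n + 1 + N = n + N + 1 by omega, Function.iterate_succ_apply']
    have hf0 : ‖f 0‖ < (minMod f)^[n + 1 + N] r₀ := hN _ (Nat.le_add_left N _)
    rw [hstep] at hf0 ⊢
    exact surrounds_ball_minMod hf.continuous hopen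
      ((norm_nonneg _).trans_lt (hN _ (Nat.le_add_left N n))) hf0
  · obtain ⟨M, hM⟩ := (htend.eventually_ge_atTop R).exists_forall_of_atTop
    exact ⟨M, fun n hn => ball_subset_ball (hM _ (hn.trans (Nat.le_add_right n N)))⟩

/-- If `f` is entire with `m^[n] r₀ → ∞` for some `r₀ > 0` and `f` has a point of
period 2, then for some `N`, with `D n = {z : |z| < m^[n+N] r₀}`, `f(∂ D n)` surrounds
`D (n+1)` for every `n`, and every disc centred at `0` is contained in `D n` for all
sufficiently large `n`. -/
theorem minMod_gives_surrounding_domains (f : ℂ → ℂ) (hf : Differentiable ℂ f)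
    (r₀ : ℝ) (hr₀ : 0 < r₀)
    (htend : Filter.Tendsto (fun n : ℕ => (minMod f)^[n] r₀) Filter.atTop Filter.atTop)
    (w : ℂ) (hw : f (f w) = w) :
    ∃ N : ℕ,
      (∀ n : ℕ,
        Surrounds (f '' frontier (Metric.ball (0 : ℂ) ((minMod f)^[n + N] r₀)))
          (Metric.ball (0 : ℂ) ((minMod f)^[n + 1 + N] r₀))) ∧
      ∀ R > (0 : ℝ), ∃ M : ℕ, ∀ n ≥ M,
        Metric.ball (0 : ℂ) R ⊆ Metric.ball (0 : ℂ) ((minMod f)^[n + N] r₀) :=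
  minMod_gives_surrounding_domains_general f hf r₀ htend
end

section
/- Let G₀ and G₁ be disjoint nonempty open subsets of ℂ, let f : ℂ → ℂ be continuous, and suppose there exist nonempty compact sets H₀ ⊂ G₀, H₁ ⊂ G₁ and for each n ≥ 2 nonempty compact sets H_n with inf{|z| : z ∈ H_n} → ∞, a compact set V, an integer k ≥ 1 with f^k(V) ⊇ H₀ ∪ H₁, and for each n ≥ 2 an integer m_n ≥ 1 with f^{m_n}(H₀) ⊇ H_n, f^{m_n}(H₁) ⊇ H_n and f^{m_n}(H_n) ⊇ H₀ ∪ H₁. Then for every infinite binary sequence s = (s₁, s₂, ...) ∈ {0,1}^ℕ there exists a point ζ_s ∈ V and an increasing sequence of integers (p_j) such that f^{p_{2j-1}}(ζ_s) ∈ H_{s_j} and f^{p_{2j}}(ζ_s) ∈ H_{j+1} for all j ≥ 1; in particular ζ_s has unbounded orbit, and if s ≠ s' then some iterate of f maps ζ_s into G_{s_j} and ζ_{s'} into G_{1-s_j} for some j. -/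
/-!
A binary sequence `s` prescribes the itinerary `V, H (s 1), H 2, H (s 2), H 3, …`, in which each
set is covered by a fixed iterate of its predecessor. Pulling compact sets back along the
itinerary gives a nested sequence of nonempty closed subsets of `V`, and any point of their
intersection follows the whole itinerary. Its visits to `H (j + 1)` force the orbit to infinity,
and its visits to `H (s j) ⊆ G_{s j}` separate the points coded by different sequences.
-/

open Finset

section Covering

variable {X : Type*} {f : X → X} {E : ℕ → Set X} {d : ℕ → ℕ}

lemma exists_iterate_sum_mem_of_subset_image_iterate (hcov : ∀ n, E (n + 1) ⊆ f^[d n] '' E n)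
    (n : ℕ) {w : X} (hw : w ∈ E n) :
    ∃ z, f^[∑ i ∈ range n, d i] z = w ∧ ∀ i ≤ n, f^[∑ l ∈ range i, d l] z ∈ E i := by
  induction n generalizing w with
  | zero => exact ⟨w, rfl, fun i hi => by rwa [Nat.le_zero.mp hi]⟩
  | succ n ih =>
    obtain ⟨v, hv, rfl⟩ := hcov n hw
    obtain ⟨z, rfl, hz⟩ := ih hv
    have hzn : f^[∑ i ∈ range (n + 1), d i] z = f^[d n] (f^[∑ i ∈ range n, d i] z) := by
      rw [sum_range_succ, add_comm, Function.iterate_add_apply]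
    refine ⟨z, hzn, fun i hi => ?_⟩
    rcases Nat.le_succ_iff.mp hi with hi | rfl
    · exact hz i hi
    · rwa [hzn]

theorem exists_forall_iterate_sum_mem [TopologicalSpace X] (hf : Continuous f)
    (h0 : IsCompact (E 0)) (hcl : ∀ n, IsClosed (E n)) (hne : ∀ n, (E n).Nonempty)
    (hcov : ∀ n, E (n + 1) ⊆ f^[d n] '' E n) :
    ∃ z ∈ E 0, ∀ n, f^[∑ i ∈ range n, d i] z ∈ E n := by
  set F : ℕ → Set X := fun n => ⋂ i ≤ n, f^[∑ l ∈ range i, d l] ⁻¹' E i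
  have hF0 : F 0 = E 0 := by simp [F]
  have hFanti : ∀ n, F (n + 1) ⊆ F n := fun n =>
    Set.biInter_subset_biInter_left fun i (hi : i ≤ n) => Nat.le_succ_of_le hi
  have hFne : ∀ n, (F n).Nonempty := fun n =>
    let ⟨_, hw⟩ := hne n
    let ⟨z, _, hz⟩ := exists_iterate_sum_mem_of_subset_image_iterate hcov n hw
    ⟨z, Set.mem_iInter₂.mpr hz⟩
  have hFcl : ∀ n, IsClosed (F n) := fun n =>
    isClosed_biInter fun i _ => (hcl i).preimage (hf.iterate _)
  obtain ⟨z, hz⟩ := IsCompact.nonempty_iInter_of_sequence_nonempty_isCompact_isClosed F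
    hFanti hFne (hF0 ▸ h0) hFcl
  rw [Set.mem_iInter] at hz
  exact ⟨z, hF0 ▸ hz 0, fun n => Set.mem_iInter₂.mp (hz n) n le_rfl⟩

end Covering

section Itinerary

variable {X : Type*} {V : Set X} {H : ℕ → Set X} {s : ℕ → ℕ} {k : ℕ} {m : ℕ → ℕ}

/-- The times `k, m 2, m 2, m 3, m 3, …` between consecutive sets of `itinerary`. -/
def stepTime (k : ℕ) (m : ℕ → ℕ) : ℕ → ℕ
  | 0 => k
  | n + 1 => m (n / 2 + 2)

/-- The sequence of sets `V, H (s 1), H 2, H (s 2), H 3, …`. -/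
def itinerary (V : Set X) (H : ℕ → Set X) (s : ℕ → ℕ) : ℕ → Set X
  | 0 => V
  | n + 1 => if Even n then H (s (n / 2 + 1)) else H (n / 2 + 2)

lemma itinerary_two_mul_add_one (j : ℕ) : itinerary V H s (2 * j + 1) = H (s (j + 1)) := by
  simp [itinerary]

lemma itinerary_two_mul_add_two (j : ℕ) : itinerary V H s (2 * j + 2) = H (j + 2) := by
  simp [itinerary, show (2 * j + 1) / 2 = j by omega]

lemma itinerary_two_mul_sub_one {j : ℕ} (hj : 1 ≤ j) :
    itinerary V H s (2 * j - 1) = H (s j) := by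
  obtain ⟨i, rfl⟩ := Nat.exists_eq_add_of_le' hj
  rw [show 2 * (i + 1) - 1 = 2 * i + 1 by omega, itinerary_two_mul_add_one]

lemma itinerary_two_mul {j : ℕ} (hj : 1 ≤ j) : itinerary V H s (2 * j) = H (j + 1) := by
  obtain ⟨i, rfl⟩ := Nat.exists_eq_add_of_le' hj
  rw [show 2 * (i + 1) = 2 * i + 2 by ring, itinerary_two_mul_add_two]

lemma itinerary_mem {S : Set (Set X)} (hV : V ∈ S) (hH : ∀ n, H n ∈ S) (n : ℕ) :
    itinerary V H s n ∈ S := by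
  cases n with
  | zero => exact hV
  | succ n => simp only [itinerary]; split_ifs <;> apply hH

lemma stepTime_pos (hk : 1 ≤ k) (hm : ∀ n, 2 ≤ n → 1 ≤ m n) (n : ℕ) : 0 < stepTime k m n := by
  cases n with
  | zero => exact hk
  | succ n => exact hm _ (by omega)

lemma itinerary_subset_image_iterate {f : X → X} (hkV : H 0 ∪ H 1 ⊆ f^[k] '' V)
    (hm : ∀ n, 2 ≤ n →
      H n ⊆ f^[m n] '' H 0 ∧ H n ⊆ f^[m n] '' H 1 ∧ H 0 ∪ H 1 ⊆ f^[m n] '' H n)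
    (hs : ∀ j, 1 ≤ j → s j ≤ 1) (n : ℕ) :
    itinerary V H s (n + 1) ⊆ f^[stepTime k m n] '' itinerary V H s n := by
  have hbin : ∀ j, 1 ≤ j → H (s j) = H 0 ∨ H (s j) = H 1 := fun j hj => by
    rcases Nat.le_one_iff_eq_zero_or_eq_one.mp (hs j hj) with h | h <;> simp [h]
  have hsub : ∀ j, 1 ≤ j → H (s j) ⊆ H 0 ∪ H 1 := fun j hj => by
    rcases hbin j hj with h | h <;> rw [h]
    exacts [Set.subset_union_left, Set.subset_union_right]
  obtain ⟨j, rfl | rfl⟩ := Nat.even_or_odd' n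
  · cases j with
    | zero => exact (hsub 1 le_rfl).trans hkV
    | succ j =>
      rw [show 2 * (j + 1) = 2 * j + 2 by ring, show 2 * j + 2 + 1 = 2 * (j + 1) + 1 by ring,
        itinerary_two_mul_add_one, itinerary_two_mul_add_two]
      simp only [stepTime, show (2 * j + 1) / 2 + 2 = j + 2 by omega]
      exact (hsub (j + 2) (by omega)).trans (hm (j + 2) (by omega)).2.2
  · rw [itinerary_two_mul_add_two, itinerary_two_mul_add_one]
    have hmj := hm (j + 2) (by omega)
    simp only [stepTime, show 2 * j / 2 + 2 = j + 2 by omega]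
    rcases hbin (j + 1) (by omega) with h | h <;> rw [h]
    exacts [hmj.1, hmj.2.1]

end Itinerary

lemma subset_ite_of_le_one {X : Type*} {H : ℕ → Set X} {G₀ G₁ : Set X} (hH0 : H 0 ⊆ G₀)
    (hH1 : H 1 ⊆ G₁) {b : ℕ} (hb : b ≤ 1) : H b ⊆ if b = 0 then G₀ else G₁ := by
  rcases Nat.le_one_iff_eq_zero_or_eq_one.mp hb with rfl | rfl
  exacts [hH0, hH1]

lemma not_isBounded_range_of_frequently_mem {F : Type*} [SeminormedAddCommGroup F] {x : ℕ → F}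
    {H : ℕ → Set F} (hH : ∀ R : ℝ, ∃ N : ℕ, ∀ n ≥ N, ∀ z ∈ H n, R ≤ ‖z‖)
    (hx : ∀ N, ∃ n ≥ N, ∃ i, x i ∈ H n) : ¬ Bornology.IsBounded (Set.range x) := by
  rw [isBounded_iff_forall_norm_le]
  rintro ⟨C, hC⟩
  obtain ⟨N, hN⟩ := hH (C + 1)
  obtain ⟨n, hn, i, hi⟩ := hx N
  linarith [hN n hn _ hi, hC _ (Set.mem_range_self i)]

theorem symbolic_dynamics_uncountable_general (f : ℂ → ℂ) (hf : Continuous f)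
    (G₀ G₁ : Set ℂ)
    (H : ℕ → Set ℂ) (hHc : ∀ n, IsCompact (H n)) (hHne : ∀ n, (H n).Nonempty)
    (hH0 : H 0 ⊆ G₀) (hH1 : H 1 ⊆ G₁)
    (hHinf : ∀ R : ℝ, ∃ N : ℕ, ∀ n ≥ N, ∀ z ∈ H n, R ≤ ‖z‖)
    (V : Set ℂ) (hV : IsCompact V)
    (k : ℕ) (hk : 1 ≤ k) (hkV : H 0 ∪ H 1 ⊆ f^[k] '' V)
    (m : ℕ → ℕ)
    (hm : ∀ n : ℕ, 2 ≤ n → 1 ≤ m n ∧ H n ⊆ f^[m n] '' H 0 ∧ H n ⊆ f^[m n] '' H 1 ∧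
      H 0 ∪ H 1 ⊆ f^[m n] '' H n) :
    ∃ P : ℕ → ℕ, StrictMono P ∧
      ∃ Z : (ℕ → ℕ) → ℂ,
        (∀ s : ℕ → ℕ, (∀ j, 1 ≤ j → s j ≤ 1) →
          Z s ∈ V ∧
          (∀ j, 1 ≤ j → f^[P (2 * j - 1)] (Z s) ∈ H (s j) ∧
            f^[P (2 * j)] (Z s) ∈ H (j + 1)) ∧
          ¬ Bornology.IsBounded (Set.range fun n : ℕ => f^[n] (Z s))) ∧
        ∀ s s' : ℕ → ℕ, (∀ j, 1 ≤ j → s j ≤ 1) → (∀ j, 1 ≤ j → s' j ≤ 1) →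
          (∃ j, 1 ≤ j ∧ s j ≠ s' j) →
          ∃ j, 1 ≤ j ∧ s j ≠ s' j ∧
            f^[P (2 * j - 1)] (Z s) ∈ (if s j = 0 then G₀ else G₁) ∧
            f^[P (2 * j - 1)] (Z s') ∈ (if s j = 0 then G₁ else G₀) := by
  set P : ℕ → ℕ := fun n => ∑ i ∈ range n, stepTime k m i
  have hP : StrictMono P := strictMono_nat_of_lt_succ fun n => by
    simpa [P, sum_range_succ] using stepTime_pos hk (fun n hn => (hm n hn).1) n
  have hVne : V.Nonempty := ((hHne 0).mono (Set.subset_union_left.trans hkV)).of_image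
  have hcompact : ∀ s n, IsCompact (itinerary V H s n) := fun _ =>
    itinerary_mem (S := {K | IsCompact K}) hV hHc
  have hfollow : ∀ s, (∀ j, 1 ≤ j → s j ≤ 1) → ∃ z ∈ V, ∀ n, f^[P n] z ∈ itinerary V H s n :=
    fun s hs => exists_forall_iterate_sum_mem hf (hcompact s 0) (fun n => (hcompact s n).isClosed)
      (itinerary_mem (S := {K | K.Nonempty}) hVne hHne)
      (itinerary_subset_image_iterate hkV (fun n hn => (hm n hn).2) hs)
  choose! Z hZV hZ using hfollow
  have hvisit : ∀ s, (∀ j, 1 ≤ j → s j ≤ 1) → ∀ j, 1 ≤ j →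
      f^[P (2 * j - 1)] (Z s) ∈ H (s j) ∧ f^[P (2 * j)] (Z s) ∈ H (j + 1) := fun s hs j hj => by
    simpa only [itinerary_two_mul_sub_one hj, itinerary_two_mul hj] using
      And.intro (hZ s hs (2 * j - 1)) (hZ s hs (2 * j))
  refine ⟨P, hP, Z, fun s hs => ⟨hZV s hs, hvisit s hs, ?_⟩, ?_⟩
  · exact not_isBounded_range_of_frequently_mem hHinf fun N =>
      ⟨N + 2, by omega, _, (hvisit s hs (N + 1) (by omega)).2⟩
  · rintro s s' hs hs' ⟨j, hj, hne⟩
    have hswap : (if s j = 0 then G₁ else G₀) = if s' j = 0 then G₀ else G₁ := by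
      have := hs j hj; have := hs' j hj
      split_ifs <;> first | rfl | omega
    exact ⟨j, hj, hne, subset_ite_of_le_one hH0 hH1 (hs j hj) (hvisit s hs j hj).1,
      hswap ▸ subset_ite_of_le_one hH0 hH1 (hs' j hj) (hvisit s' hs' j hj).1⟩

/-- Symbolic-dynamics construction: given disjoint open sets `G₀, G₁`, compact sets
`H n` (with `H 0 ⊆ G₀`, `H 1 ⊆ G₁`, and `inf {|z| : z ∈ H n} → ∞`), a compact `V` with
`f^[k] '' V ⊇ H 0 ∪ H 1`, and covering times `m n`, every binary sequence `s` codes a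
point `ζ_s ∈ V` whose orbit visits `H (s j)` and `H (j+1)` at prescribed increasing
times; in particular `ζ_s` has unbounded orbit, and distinct sequences are separated by
some iterate landing in `G₀` resp. `G₁`. -/
theorem symbolic_dynamics_uncountable (f : ℂ → ℂ) (hf : Continuous f)
    (G₀ G₁ : Set ℂ) (hG₀ : IsOpen G₀) (hG₁ : IsOpen G₁)
    (hG₀ne : G₀.Nonempty) (hG₁ne : G₁.Nonempty) (hdisj : Disjoint G₀ G₁)
    (H : ℕ → Set ℂ) (hHc : ∀ n, IsCompact (H n)) (hHne : ∀ n, (H n).Nonempty)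
    (hH0 : H 0 ⊆ G₀) (hH1 : H 1 ⊆ G₁)
    (hHinf : ∀ R : ℝ, ∃ N : ℕ, ∀ n ≥ N, ∀ z ∈ H n, R ≤ ‖z‖)
    (V : Set ℂ) (hV : IsCompact V)
    (k : ℕ) (hk : 1 ≤ k) (hkV : H 0 ∪ H 1 ⊆ f^[k] '' V)
    (m : ℕ → ℕ)
    (hm : ∀ n : ℕ, 2 ≤ n → 1 ≤ m n ∧ H n ⊆ f^[m n] '' H 0 ∧ H n ⊆ f^[m n] '' H 1 ∧
      H 0 ∪ H 1 ⊆ f^[m n] '' H n) :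
    ∃ P : ℕ → ℕ, StrictMono P ∧
      ∃ Z : (ℕ → ℕ) → ℂ,
        (∀ s : ℕ → ℕ, (∀ j, 1 ≤ j → s j ≤ 1) →
          Z s ∈ V ∧
          (∀ j, 1 ≤ j → f^[P (2 * j - 1)] (Z s) ∈ H (s j) ∧
            f^[P (2 * j)] (Z s) ∈ H (j + 1)) ∧
          ¬ Bornology.IsBounded (Set.range fun n : ℕ => f^[n] (Z s))) ∧
        ∀ s s' : ℕ → ℕ, (∀ j, 1 ≤ j → s j ≤ 1) → (∀ j, 1 ≤ j → s' j ≤ 1) →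
          (∃ j, 1 ≤ j ∧ s j ≠ s' j) →
          ∃ j, 1 ≤ j ∧ s j ≠ s' j ∧
            f^[P (2 * j - 1)] (Z s) ∈ (if s j = 0 then G₀ else G₁) ∧
            f^[P (2 * j - 1)] (Z s') ∈ (if s j = 0 then G₁ else G₀) :=
  symbolic_dynamics_uncountable_general f hf G₀ G₁ H hHc hHne hH0 hH1 hHinf V hV k hk hkV m hm
end
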